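/- Let X be a random vector in ℝ^d with E[X] = g, E[‖X − g‖²] ≤ σ², and ‖g‖ ≤ λ/2 for some λ > 0. Define X̃ = clip(X, λ). Then ‖E[X̃] − g‖² ≤ 16σ⁴/λ². -/

import Mathlib

open MeasureTheory

/-- Clipping operator: `clip x λ = min{1, λ/‖x‖} • x` (with `clip 0 λ = 0`). -/
noncomputable def clip {E : Type*} [NormedAddCommGroup E] [InnerProductSpace ℝ E]
    (x : E) (lam : ℝ) : E := (min 1 (lam / ‖x‖)) • x

/-!
Clipping moves `x` by exactly `max (‖x‖ - λ) 0`. As `‖g‖ ≤ λ/2`, this is at most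
`max (‖x - g‖ - λ/2) 0 ≤ 2‖x - g‖² / λ`, a pointwise Chebyshev-type bound. Integrating it gives
`‖E[clip X] - g‖ ≤ 2σ²/λ`, and squaring gives the claim, even with constant 4 instead of 16.
-/

section Clip

variable {E : Type*} [NormedAddCommGroup E] [InnerProductSpace ℝ E]

lemma clip_of_norm_le {x : E} {lam : ℝ} (h : ‖x‖ ≤ lam) : clip x lam = x := by
  rcases eq_or_ne x 0 with rfl | hx
  · simp [clip]
  · have : 1 ≤ lam / ‖x‖ := (one_le_div (norm_pos_iff.mpr hx)).mpr h
    simp [clip, min_eq_left this]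

lemma norm_clip_le (x : E) {lam : ℝ} (hlam : 0 ≤ lam) : ‖clip x lam‖ ≤ ‖x‖ := by
  have h0 : 0 ≤ min 1 (lam / ‖x‖) := le_min zero_le_one (by positivity)
  rw [clip, norm_smul, Real.norm_of_nonneg h0]
  exact mul_le_of_le_one_left (norm_nonneg x) (min_le_left _ _)

lemma norm_clip_sub_self (x : E) {lam : ℝ} (hlam : 0 ≤ lam) :
    ‖clip x lam - x‖ = max (‖x‖ - lam) 0 := by
  rcases le_or_gt ‖x‖ lam with h | h
  · simp [clip_of_norm_le h, h]
  · have hx : 0 < ‖x‖ := hlam.trans_lt h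
    have hlt : lam / ‖x‖ < 1 := (div_lt_one hx).mpr h
    have hshift : (lam / ‖x‖) • x - x = (lam / ‖x‖ - 1) • x := by rw [sub_smul, one_smul]
    rw [clip, min_eq_right hlt.le, hshift, norm_smul, Real.norm_of_nonpos (by linarith),
      max_eq_left (by linarith)]
    field_simp
    ring

lemma norm_clip_sub_self_le (x g : E) {lam : ℝ} (hlam : 0 < lam) (hg : ‖g‖ ≤ lam / 2) :
    ‖clip x lam - x‖ ≤ 2 * ‖x - g‖ ^ 2 / lam := by
  rw [norm_clip_sub_self x hlam.le, max_le_iff]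
  refine ⟨?_, by positivity⟩
  have hfar : ‖x‖ - lam ≤ ‖x - g‖ - lam / 2 := by linarith [norm_sub_norm_le x g]
  rw [le_div_iff₀ hlam]
  nlinarith [mul_le_mul_of_nonneg_right hfar hlam.le, sq_nonneg (‖x - g‖ - lam / 4)]

variable {Ω : Type*} [MeasurableSpace Ω] {μ : Measure Ω}

lemma MeasureTheory.AEStronglyMeasurable.clip {X : Ω → E} (hX : AEStronglyMeasurable X μ)
    (lam : ℝ) : AEStronglyMeasurable (fun ω => clip (X ω) lam) μ :=
  (aemeasurable_const.min (hX.norm.aemeasurable.const_div lam)).aestronglyMeasurable.smul hX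

lemma MeasureTheory.Integrable.clip {X : Ω → E} (hX : Integrable X μ) {lam : ℝ} (hlam : 0 ≤ lam) :
    Integrable (fun ω => clip (X ω) lam) μ :=
  hX.mono (hX.aestronglyMeasurable.clip lam) (.of_forall fun ω => norm_clip_le (X ω) hlam)

lemma norm_integral_clip_sub_integral_le {X : Ω → E} (hX : Integrable X μ) {g : E} {lam : ℝ}
    (hlam : 0 < lam) (hg : ‖g‖ ≤ lam / 2) (hvar : Integrable (fun ω => ‖X ω - g‖ ^ 2) μ) :
    ‖(∫ ω, clip (X ω) lam ∂μ) - ∫ ω, X ω ∂μ‖ ≤ 2 * (∫ ω, ‖X ω - g‖ ^ 2 ∂μ) / lam := by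
  calc ‖(∫ ω, clip (X ω) lam ∂μ) - ∫ ω, X ω ∂μ‖
      = ‖∫ ω, (clip (X ω) lam - X ω) ∂μ‖ := by rw [integral_sub (hX.clip hlam.le) hX]
    _ ≤ ∫ ω, ‖clip (X ω) lam - X ω‖ ∂μ := norm_integral_le_integral_norm _
    _ ≤ ∫ ω, 2 * ‖X ω - g‖ ^ 2 / lam ∂μ :=
        integral_mono_of_nonneg (.of_forall fun _ => norm_nonneg _)
          ((hvar.const_mul 2).div_const lam)
          (.of_forall fun ω => norm_clip_sub_self_le (X ω) g hlam hg)
    _ = 2 * (∫ ω, ‖X ω - g‖ ^ 2 ∂μ) / lam := by rw [integral_div, integral_const_mul]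

end Clip

theorem clipping_bias_sq_of_bounded_variance_general {d : ℕ} {Ω : Type*} [MeasurableSpace Ω]
    (μ : Measure Ω)
    (X : Ω → EuclideanSpace ℝ (Fin d)) (hXint : Integrable X μ)
    (g : EuclideanSpace ℝ (Fin d)) (σ lam : ℝ) (hlam : 0 < lam)
    (hmean : ∫ ω, X ω ∂μ = g)
    (hvarInt : Integrable (fun ω => ‖X ω - g‖ ^ 2) μ)
    (hvar : ∫ ω, ‖X ω - g‖ ^ 2 ∂μ ≤ σ ^ 2)
    (hg : ‖g‖ ≤ lam / 2) :
    ‖(∫ ω, clip (X ω) lam ∂μ) - g‖ ^ 2 ≤ 16 * σ ^ 4 / lam ^ 2 := by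
  have hbias : ‖(∫ ω, clip (X ω) lam ∂μ) - g‖ ≤ 2 * σ ^ 2 / lam := by
    have h := norm_integral_clip_sub_integral_le hXint hlam hg hvarInt
    rw [hmean] at h
    exact h.trans (by gcongr)
  calc ‖(∫ ω, clip (X ω) lam ∂μ) - g‖ ^ 2 ≤ (2 * σ ^ 2 / lam) ^ 2 := by gcongr
    _ = 4 * σ ^ 4 / lam ^ 2 := by ring
    _ ≤ 16 * σ ^ 4 / lam ^ 2 := by gcongr; norm_num

/-- Gorbunov et al. Lemma F.5, squared-bias form: if `E[X] = g`,
`E[‖X − g‖²] ≤ σ²` and `‖g‖ ≤ λ/2`, then `‖E[clip(X,λ)] − g‖² ≤ 16σ⁴/λ²`. -/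
theorem clipping_bias_sq_of_bounded_variance {d : ℕ} {Ω : Type*} [MeasurableSpace Ω]
    (μ : Measure Ω) [IsProbabilityMeasure μ]
    (X : Ω → EuclideanSpace ℝ (Fin d)) (hX : Measurable X) (hXint : Integrable X μ)
    (g : EuclideanSpace ℝ (Fin d)) (σ lam : ℝ) (hσ : 0 ≤ σ) (hlam : 0 < lam)
    (hmean : ∫ ω, X ω ∂μ = g)
    (hvarInt : Integrable (fun ω => ‖X ω - g‖ ^ 2) μ)
    (hvar : ∫ ω, ‖X ω - g‖ ^ 2 ∂μ ≤ σ ^ 2)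
    (hg : ‖g‖ ≤ lam / 2) :
    ‖(∫ ω, clip (X ω) lam ∂μ) - g‖ ^ 2 ≤ 16 * σ ^ 4 / lam ^ 2 :=
  clipping_bias_sq_of_bounded_variance_general μ X hXint g σ lam hlam hmean hvarInt hvar hg
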